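/- For n ≥ 1, Σ_{T} Π_{v∈I(T)} ((h_v+1)x + 1 − h_v)/(2h_v) = (1/(n+1)) · binomial((n+1)x, n) as polynomials in x, where the sum is over all complete binary trees T with n internal vertices. -/

import Mathlib

open Polynomial

inductive PlaneTree : Type where
  | node : List PlaneTree → PlaneTree

namespace PlaneTree

/-- total number of vertices -/
def numVertices : PlaneTree → ℕ
  | node ts => 1 + (ts.attach.map (fun t => numVertices t.1)).sum
decreasing_by simp only [PlaneTree.node.sizeOf_spec]; exact Nat.lt_add_left 1 (List.sizeOf_lt_of_mem t.2)

/-- number of internal vertices (vertices with at least one child) -/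
def numInternal : PlaneTree → ℕ
  | node ts => (if ts.isEmpty then 0 else 1) + (ts.attach.map (fun t => numInternal t.1)).sum
decreasing_by simp only [PlaneTree.node.sizeOf_spec]; exact Nat.lt_add_left 1 (List.sizeOf_lt_of_mem t.2)

/-- product of `g h_v` over all internal vertices `v`, where `h_v` is the number of
internal vertices of the subtree rooted at `v` -/
def internalHookProd {α : Type} [CommMonoid α] (g : ℕ → α) : PlaneTree → α
  | node ts =>
    (if ts.isEmpty then 1 else g (numInternal (node ts))) *
      (ts.attach.map (fun t => internalHookProd g t.1)).prod
decreasing_by simp only [PlaneTree.node.sizeOf_spec]; exact Nat.lt_add_left 1 (List.sizeOf_lt_of_mem t.2)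

/-- product of `g h_v` over all vertices `v`, where `h_v` is the number of
vertices of the subtree rooted at `v` -/
def vertexHookProd {α : Type} [CommMonoid α] (g : ℕ → α) : PlaneTree → α
  | node ts =>
    g (numVertices (node ts)) * (ts.attach.map (fun t => vertexHookProd g t.1)).prod
decreasing_by simp only [PlaneTree.node.sizeOf_spec]; exact Nat.lt_add_left 1 (List.sizeOf_lt_of_mem t.2)

/-- every internal vertex has exactly `a` children -/
def IsFullAry (a : ℕ) : PlaneTree → Prop
  | node ts => (ts.length = 0 ∨ ts.length = a) ∧ ∀ t ∈ ts, IsFullAry a t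

/-- `IsKMAry k m b T`: with the root of `T` viewed as being on a level of parity `b`
(`b = false` meaning even), every vertex on an even level has `k` children and
every vertex on an odd level has `m` or `0` children. -/
def IsKMAry (k m : ℕ) : Bool → PlaneTree → Prop
  | b, node ts =>
    (if b then ts.length = m ∨ ts.length = 0 else ts.length = k) ∧
      ∀ t ∈ ts, IsKMAry k m (!b) t

/-- number of vertices on levels of parity `b`, the root having parity `cur` -/
def parityVertices (b cur : Bool) : PlaneTree → ℕ
  | node ts =>
    (if cur = b then 1 else 0) + (ts.attach.map (fun t => parityVertices b (!cur) t.1)).sum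
termination_by T => sizeOf T
decreasing_by simp only [PlaneTree.node.sizeOf_spec]; exact Nat.lt_add_left 1 (List.sizeOf_lt_of_mem t.2)

/-- number of internal vertices on levels of parity `b`, the root having parity `cur` -/
def parityInternal (b cur : Bool) : PlaneTree → ℕ
  | node ts =>
    (if cur = b ∧ ¬ts.isEmpty then 1 else 0) +
      (ts.attach.map (fun t => parityInternal b (!cur) t.1)).sum
termination_by T => sizeOf T
decreasing_by simp only [PlaneTree.node.sizeOf_spec]; exact Nat.lt_add_left 1 (List.sizeOf_lt_of_mem t.2)

/-- the order of a `(k,m)`-ary tree: the number of internal (crucial) vertices on odd levels -/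
def kmOrder (T : PlaneTree) : ℕ := parityInternal true false T

end PlaneTree

/-- the polynomial `binomial (a*x, n) = (ax)(ax-1)...(ax-n+1)/n!` -/
noncomputable def binomPoly (a n : ℕ) : Polynomial ℚ :=
  Polynomial.C (1 / (n.factorial : ℚ)) *
    ∏ i ∈ Finset.range n, (Polynomial.C (a : ℚ) * Polynomial.X - Polynomial.C (i : ℚ))

/-!
Deleting the root of a complete binary tree leaves two complete binary trees, so the tree sum
`A n` satisfies `A (n + 1) = w (n + 1) * ∑_{i + j = n} A i * A j`, where `w` is the vertex weight.
The claimed value `choose ((n + 1) x) n / (n + 1)` is the Rothe–Hagen coefficient `g n x x`, where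
`g k x z = x / (x + k z) * choose (x + k z) k`. The Rothe–Hagen convolution
`∑_{i + j = n} g i x z * g j y z = g n (x + y) z` reduces the recurrence to
`2 (n + 1) g (n + 1) x x = ((n + 2) x - n) g n (2 x) x`, an instance of absorption for binomial
coefficients. The convolution itself follows from Gould's identity
`∑_{i + j = n} g i x z * choose (y + j z) j = choose (x + y + n z) n`, proved by induction on `n`:
both sides are polynomials in `x` that agree at `x = 0` and obey the same Pascal recursion under
`x ↦ x - 1`.
-/

open Finset

namespace Ring

variable {R : Type*} [CommRing R] [BinomialRing R]

theorem choose_succ_right_eq (r : R) (k : ℕ) :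
    choose r (k + 1) * (k + 1) = choose r k * (r - k) := by
  have h := choose_smul_choose r (n := k + 1) (k := k) (Nat.le_succ k)
  simpa [choose_one_right, nsmul_eq_mul, mul_comm] using h

theorem choose_succ_mul_succ_eq (r : R) (k : ℕ) :
    choose r (k + 1) * (k + 1) = r * choose (r - 1) k := by
  have h := choose_smul_choose r (n := k + 1) (k := 1) (by omega)
  simpa [choose_one_right, nsmul_eq_mul, mul_comm] using h

theorem choose_eq_prod_div {K : Type*} [Field K] [CharZero K] (a : K) (n : ℕ) :
    choose a n = (∏ j ∈ range n, (a - j)) / n.factorial := by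
  rw [choose_eq_smul, ← aeval_eq_smeval, aeval_def, eval₂_eq_eval_map, descPochhammer_map,
    descPochhammer_eval_eq_prod_range, smul_eq_mul, div_eq_inv_mul]

end Ring

section Gould

variable {R S : Type*} [CommRing R] [BinomialRing R] [CommRing S] [BinomialRing S]

/-- The Rothe–Hagen coefficient `x / (x + k z) * choose (x + k z) k`, written without division. -/
def gould : ℕ → R → R → R
  | 0, _, _ => 1
  | k + 1, x, z => Ring.choose (x + (k + 1) * z) (k + 1) - z * Ring.choose (x + (k + 1) * z - 1) k

def gouldChooseConv (n : ℕ) (x y z : R) : R :=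
  ∑ p ∈ antidiagonal n, gould p.1 x z * Ring.choose (y + p.2 * z) p.2

@[simp]
theorem gould_zero (x z : R) : gould 0 x z = 1 := rfl

theorem gould_succ (k : ℕ) (x z : R) :
    gould (k + 1) x z =
      Ring.choose (x + (k + 1) * z) (k + 1) - z * Ring.choose (x + (k + 1) * z - 1) k := rfl

theorem map_gould (f : R →+* S) (k : ℕ) (x z : R) : f (gould k x z) = gould k (f x) (f z) := by
  cases k <;> simp [gould_succ, Ring.map_choose]

theorem map_gouldChooseConv (f : R →+* S) (n : ℕ) (x y z : R) :
    f (gouldChooseConv n x y z) = gouldChooseConv n (f x) (f y) (f z) := by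
  simp [gouldChooseConv, map_gould, Ring.map_choose]

theorem gould_succ_eq_add (k : ℕ) (x z : R) :
    gould (k + 1) x z = gould (k + 1) (x - 1) z + gould k (x + z - 1) z := by
  cases k with
  | zero => simp [gould_succ]
  | succ k =>
    have h₁ := Ring.choose_succ_succ (x - 1 + (k + 2) * z) (k + 1)
    have h₂ := Ring.choose_succ_succ (x - 2 + (k + 2) * z) k
    simp only [gould_succ]
    push_cast
    ring_nf at h₁ h₂ ⊢
    linear_combination h₁ - z * h₂

theorem gouldChooseConv_succ_eq_add (n : ℕ) (x y z : R) :
    gouldChooseConv (n + 1) x y z =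
      gouldChooseConv (n + 1) (x - 1) y z + gouldChooseConv n (x + z - 1) y z := by
  simp only [gouldChooseConv, Finset.Nat.sum_antidiagonal_succ, gould_zero]
  rw [add_assoc, ← sum_add_distrib]
  congr 1
  refine sum_congr rfl fun p _ => ?_
  rw [gould_succ_eq_add, add_mul]

theorem add_mul_gould_mul_self (k : ℕ) (r x : R) :
    (k + r) * gould k (r * x) x = r * Ring.choose ((k + r) * x) k := by
  cases k with
  | zero => simp
  | succ k =>
    have h := Ring.choose_succ_mul_succ_eq ((k + 1 + r) * x) k
    simp only [gould_succ]
    push_cast at h ⊢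
    rw [show r * x + (k + 1) * x = (k + 1 + r) * x by ring]
    linear_combination h

end Gould

theorem Polynomial.eval_eq_eval_zero_of_eval_sub_one {K : Type*} [CommRing K] [IsDomain K]
    [CharZero K] {p : K[X]} (h : ∀ x, p.eval x = p.eval (x - 1)) (x : K) :
    p.eval x = p.eval 0 := by
  have hnat (m : ℕ) : p.eval (m : K) = p.eval 0 := by
    induction m with
    | zero => simp
    | succ m ih => rw [h, Nat.cast_succ, add_sub_cancel_right, ih]
  have hconst : p = C (p.eval 0) := by
    refine eq_of_infinite_eval_eq _ _ (Set.infinite_of_injective_forall_mem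
      Nat.cast_injective fun m => ?_)
    simp [hnat m]
  rw [hconst, eval_C, eval_C]

section CharZero

variable {K : Type*} [Field K] [CharZero K]

theorem gould_succ_zero_left (k : ℕ) (z : K) : gould (k + 1) 0 z = 0 := by
  have h := add_mul_gould_mul_self (k + 1) 0 z
  rw [zero_mul, zero_mul, add_zero] at h
  exact (mul_eq_zero.mp h).resolve_left (by exact_mod_cast k.succ_ne_zero)

theorem gouldChooseConv_zero_left (n : ℕ) (y z : K) :
    gouldChooseConv n 0 y z = Ring.choose (y + n * z) n := by
  cases n with
  | zero => simp [gouldChooseConv]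
  | succ n => simp [gouldChooseConv, Finset.Nat.sum_antidiagonal_succ, gould_succ_zero_left]

theorem gouldChooseConv_eq (n : ℕ) (x y z : K) :
    gouldChooseConv n x y z = Ring.choose (x + y + n * z) n := by
  induction n generalizing x with
  | zero => simp [gouldChooseConv]
  | succ n ih =>
    set p : K[X] := gouldChooseConv (n + 1) X (C y) (C z) -
      Ring.choose (X + C y + ((n + 1 : ℕ) : K[X]) * C z) (n + 1) with hp
    have hp_eval (t : K) :
        p.eval t =
          gouldChooseConv (n + 1) t y z - Ring.choose (t + y + (n + 1 : ℕ) * z) (n + 1) := by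
      rw [hp, ← coe_evalRingHom, map_sub, map_gouldChooseConv, Ring.map_choose]
      simp
    have hshift (t : K) : p.eval t = p.eval (t - 1) := by
      have hpascal := Ring.choose_succ_succ (t - 1 + y + (n + 1 : ℕ) * z) n
      rw [hp_eval, hp_eval, gouldChooseConv_succ_eq_add, ih]
      push_cast at hpascal ⊢
      rw [show t - 1 + y + (n + 1) * z + 1 = t + y + (n + 1) * z by ring,
        show t - 1 + y + (n + 1) * z = t + z - 1 + y + n * z by ring] at hpascal
      rw [hpascal]
      ring_nf
    have h := Polynomial.eval_eq_eval_zero_of_eval_sub_one hshift x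
    rw [hp_eval, hp_eval, gouldChooseConv_zero_left, zero_add, sub_self, sub_eq_zero] at h
    exact h

theorem sum_antidiagonal_gould_mul_gould (n : ℕ) (x y z : K) :
    ∑ p ∈ antidiagonal n, gould p.1 x z * gould p.2 y z = gould n (x + y) z := by
  cases n with
  | zero => simp
  | succ n =>
    have hconv := gouldChooseConv_eq (n + 1) x y z
    have hconv' := gouldChooseConv_eq n x (y + z - 1) z
    rw [gould_succ, show x + y + (n + 1) * z - 1 = x + (y + z - 1) + n * z by ring]
    push_cast at hconv
    rw [← hconv, ← hconv', gouldChooseConv, gouldChooseConv, Finset.Nat.sum_antidiagonal_succ',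
      Finset.Nat.sum_antidiagonal_succ', mul_sum, add_sub_assoc, ← sum_sub_distrib]
    congr 1
    · simp
    · refine sum_congr rfl fun p _ => ?_
      rw [gould_succ]
      push_cast
      ring_nf

theorem gould_succ_self (n : ℕ) (x : K) :
    2 * (n + 1) * gould (n + 1) x x = ((n + 2) * x - n) * gould n (x + x) x := by
  have h₁ := add_mul_gould_mul_self (n + 1) 1 x
  have h₂ := add_mul_gould_mul_self n 2 x
  have h₃ := Ring.choose_succ_right_eq ((n + 2) * x) n
  push_cast at h₁
  rw [one_mul, show (n + 1 + 1 : K) = n + 2 by ring] at h₁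
  rw [two_mul] at h₂
  have hn : (n + 2 : K) ≠ 0 := by exact_mod_cast (n + 1).succ_ne_zero
  apply mul_left_cancel₀ hn
  linear_combination 2 * (n + 1) * h₁ - ((n + 2) * x - n) * h₂ + 2 * h₃

end CharZero

namespace PlaneTree

@[simp]
theorem numInternal_nil : numInternal (node []) = 0 := by
  simp [numInternal]

@[simp]
theorem numInternal_pair (L R : PlaneTree) :
    numInternal (node [L, R]) = L.numInternal + R.numInternal + 1 := by
  rw [numInternal]
  simp only [List.attach_map_val, List.isEmpty_cons, List.map_cons, List.map_nil, List.sum_cons,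
    List.sum_nil, Bool.false_eq_true, if_false]
  omega

@[simp]
theorem internalHookProd_nil {α : Type} [CommMonoid α] (g : ℕ → α) :
    internalHookProd g (node []) = 1 := by
  simp [internalHookProd]

@[simp]
theorem internalHookProd_pair {α : Type} [CommMonoid α] (g : ℕ → α) (L R : PlaneTree) :
    internalHookProd g (node [L, R]) =
      g (L.numInternal + R.numInternal + 1) * (internalHookProd g L * internalHookProd g R) := by
  rw [internalHookProd]
  simp

theorem isFullAry_two_iff {T : PlaneTree} :
    IsFullAry 2 T ↔ T = node [] ∨ ∃ L R, T = node [L, R] ∧ IsFullAry 2 L ∧ IsFullAry 2 R := by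
  obtain ⟨ts⟩ := T
  rw [IsFullAry]
  constructor
  · rintro ⟨hlen | hlen, hts⟩
    · exact Or.inl (by rw [List.length_eq_zero_iff.mp hlen])
    · obtain ⟨L, R, rfl⟩ := List.length_eq_two.mp hlen
      exact Or.inr ⟨L, R, rfl, hts L (by simp), hts R (by simp)⟩
  · rintro (h | ⟨L, R, h, hL, hR⟩) <;> simp_all

abbrev FullBinary (n : ℕ) : Type := {T : PlaneTree // IsFullAry 2 T ∧ numInternal T = n}

instance : Unique (FullBinary 0) where
  default := ⟨node [], isFullAry_two_iff.mpr (Or.inl rfl), numInternal_nil⟩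
  uniq := by
    rintro ⟨T, hT, hn⟩
    rcases isFullAry_two_iff.mp hT with rfl | ⟨L, R, rfl, -⟩
    · rfl
    · simp at hn

def pairFullBinary (n : ℕ) (p : Σ ij : antidiagonal n, FullBinary ij.1.1 × FullBinary ij.1.2) :
    FullBinary (n + 1) :=
  ⟨node [p.2.1.1, p.2.2.1], isFullAry_two_iff.mpr (Or.inr ⟨_, _, rfl, p.2.1.2.1, p.2.2.2.1⟩), by
    rw [numInternal_pair, p.2.1.2.2, p.2.2.2.2, mem_antidiagonal.mp p.1.2]⟩

theorem pairFullBinary_bijective (n : ℕ) : Function.Bijective (pairFullBinary n) := by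
  constructor
  · rintro ⟨⟨ij, hij⟩, ⟨L, hL⟩, ⟨R, hR⟩⟩ ⟨⟨ij', hij'⟩, ⟨L', hL'⟩, ⟨R', hR'⟩⟩ h
    obtain ⟨rfl, rfl⟩ : L = L' ∧ R = R' := by simpa [pairFullBinary] using h
    obtain rfl : ij = ij' := Prod.ext (hL.2.symm.trans hL'.2) (hR.2.symm.trans hR'.2)
    rfl
  · rintro ⟨T, hT, hn⟩
    rcases isFullAry_two_iff.mp hT with rfl | ⟨L, R, rfl, hL, hR⟩
    · simp at hn
    · refine ⟨⟨⟨(L.numInternal, R.numInternal), mem_antidiagonal.mpr (by simpa using hn)⟩,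
        ⟨L, hL, rfl⟩, ⟨R, hR, rfl⟩⟩, rfl⟩

noncomputable def fullBinarySuccEquiv (n : ℕ) :
    (Σ ij : antidiagonal n, FullBinary ij.1.1 × FullBinary ij.1.2) ≃ FullBinary (n + 1) :=
  Equiv.ofBijective _ (pairFullBinary_bijective n)

instance finite_fullBinary (n : ℕ) : Finite (FullBinary n) := by
  induction n using Nat.strong_induction_on with
  | _ n ih =>
    cases n with
    | zero => infer_instance
    | succ n =>
      have (ij : antidiagonal n) : Finite (FullBinary ij.1.1 × FullBinary ij.1.2) :=
        have := ih _ (Nat.antidiagonal.fst_lt ij.2)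
        have := ih _ (Nat.antidiagonal.snd_lt ij.2)
        inferInstance
      exact Finite.of_equiv _ (fullBinarySuccEquiv n)

section HookSum

variable {R : Type} [CommSemiring R] (g : ℕ → R)

noncomputable def hookSum (n : ℕ) : R := ∑ᶠ T : FullBinary n, internalHookProd g T.1

theorem hookSum_zero : hookSum g 0 = 1 := by
  rw [hookSum, finsum_unique]
  exact internalHookProd_nil g

theorem hookSum_succ (n : ℕ) :
    hookSum g (n + 1) = g (n + 1) * ∑ ij ∈ antidiagonal n, hookSum g ij.1 * hookSum g ij.2 := by
  have (m : ℕ) : Fintype (FullBinary m) := Fintype.ofFinite _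
  have hpair (p : Σ ij : antidiagonal n, FullBinary ij.1.1 × FullBinary ij.1.2) :
      internalHookProd g (fullBinarySuccEquiv n p).1 =
        g (n + 1) * (internalHookProd g p.2.1.1 * internalHookProd g p.2.2.1) := by
    obtain ⟨⟨ij, hij⟩, ⟨L, -, hL⟩, ⟨R, -, hR⟩⟩ := p
    simp [fullBinarySuccEquiv, pairFullBinary, hL, hR, mem_antidiagonal.mp hij]
  simp only [hookSum, finsum_eq_sum_of_fintype]
  rw [← (fullBinarySuccEquiv n).sum_comp, Fintype.sum_congr _ _ hpair, ← mul_sum,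
    Fintype.sum_sigma, ← sum_coe_sort (antidiagonal n)]
  simp only [Fintype.sum_mul_sum, Fintype.sum_prod_type]

theorem hookSum_eq_of_recurrence {b : ℕ → R} (h₀ : b 0 = 1)
    (hsucc : ∀ n, b (n + 1) = g (n + 1) * ∑ ij ∈ antidiagonal n, b ij.1 * b ij.2) (n : ℕ) :
    hookSum g n = b n := by
  induction n using Nat.strong_induction_on with
  | _ n ih =>
    cases n with
    | zero => rw [hookSum_zero, h₀]
    | succ n =>
      rw [hookSum_succ, hsucc]
      congr 1
      refine sum_congr rfl fun ij hij => ?_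
      rw [ih _ (Nat.antidiagonal.fst_lt hij), ih _ (Nat.antidiagonal.snd_lt hij)]

end HookSum

end PlaneTree

theorem eval_binomPoly (a n : ℕ) (x : ℚ) : (binomPoly a n).eval x = Ring.choose (a * x) n := by
  simp [binomPoly, eval_prod, Ring.choose_eq_prod_div, div_eq_inv_mul]

noncomputable def lascouxWeight (h : ℕ) : ℚ[X] :=
  (C ((h + 1 : ℕ) : ℚ) * X + C (1 - (h : ℚ))) * C (1 / ((2 * h : ℕ) : ℚ))

noncomputable def lascouxPoly (n : ℕ) : ℚ[X] :=
  C (1 / ((n + 1 : ℕ) : ℚ)) * binomPoly (n + 1) n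

theorem eval_lascouxPoly (n : ℕ) (x : ℚ) : (lascouxPoly n).eval x = gould n x x := by
  have h := add_mul_gould_mul_self n 1 x
  rw [one_mul] at h
  have hn : (n + 1 : ℚ) ≠ 0 := by positivity
  rw [lascouxPoly, eval_mul, eval_C, eval_binomPoly, eq_comm, ← mul_right_inj' hn, h]
  push_cast
  field_simp

theorem lascouxPoly_zero : lascouxPoly 0 = 1 := by
  simp [lascouxPoly, binomPoly]

theorem lascouxPoly_succ (n : ℕ) :
    lascouxPoly (n + 1) =
      lascouxWeight (n + 1) * ∑ ij ∈ antidiagonal n, lascouxPoly ij.1 * lascouxPoly ij.2 := by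
  refine Polynomial.funext fun x => ?_
  have h := gould_succ_self n x
  simp only [eval_mul, eval_finsetSum, eval_lascouxPoly, sum_antidiagonal_gould_mul_gould,
    lascouxWeight, eval_add, eval_C, eval_X]
  generalize gould (n + 1) x x = a, gould n (x + x) x = b at h ⊢
  push_cast
  field_simp
  linear_combination h

theorem lascoux_identity_general (n : ℕ) :
    (∑ᶠ T : {T : PlaneTree // PlaneTree.IsFullAry 2 T ∧ PlaneTree.numInternal T = n},
        PlaneTree.internalHookProd
          (fun h => (Polynomial.C ((h + 1 : ℕ) : ℚ) * Polynomial.X + Polynomial.C (1 - (h : ℚ))) *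
            Polynomial.C (1 / ((2 * h : ℕ) : ℚ))) T.1)
      = Polynomial.C (1 / ((n + 1 : ℕ) : ℚ)) * binomPoly (n + 1) n :=
  PlaneTree.hookSum_eq_of_recurrence lascouxWeight lascouxPoly_zero lascouxPoly_succ n

/-- Lascoux's identity: `Σ_T Π_{v∈I(T)} ((h_v+1)x + 1 - h_v)/(2h_v) = (1/(n+1))·binom((n+1)x, n)`,
summed over all complete binary trees `T` with `n` internal vertices. -/
theorem lascoux_identity (n : ℕ) (hn : 1 ≤ n) :
    (∑ᶠ T : {T : PlaneTree // PlaneTree.IsFullAry 2 T ∧ PlaneTree.numInternal T = n},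
        PlaneTree.internalHookProd
          (fun h => (Polynomial.C ((h + 1 : ℕ) : ℚ) * Polynomial.X + Polynomial.C (1 - (h : ℚ))) *
            Polynomial.C (1 / ((2 * h : ℕ) : ℚ))) T.1)
      = Polynomial.C (1 / ((n + 1 : ℕ) : ℚ)) * binomPoly (n + 1) n :=
  lascoux_identity_general n
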